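/- arXiv:2008.08646 — 2 statements merged into one kernel-verified Lean document; each statement's English description precedes it below -/
import Mathlib

section
/- If a simple digraph Γ₀ is obtained from a simple digraph Γ by flipping a single arc (a,b) ∈ E(Γ) (where (b,a) ∉ E(Γ)), then |th(Γ₀) − th(Γ)| ≤ 1. -/
open Set

/-- One time step of standard zero forcing on a digraph with arc relation `A`:
every blue vertex having a unique white out-neighbor forces it blue. -/
def dstep {V : Type*} (A : V → V → Prop) (S : Set V) : Set V :=
  S ∪ {w | ∃ u ∈ S, A u w ∧ ∀ x, A u x → x ∉ S → x = w}

/-- `B` is a zero forcing set of the digraph with arc relation `A`. -/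
def IsZFS {V : Type*} (A : V → V → Prop) (B : Set V) : Prop :=
  ∃ t, (dstep A)^[t] B = Set.univ

/-- Propagation time of `B` in the digraph with arc relation `A`. -/
noncomputable def dpt {V : Type*} (A : V → V → Prop) (B : Set V) : ℕ :=
  sInf {t | (dstep A)^[t] B = Set.univ}

/-- The throttling number of the digraph with arc relation `A`. -/
noncomputable def dth {V : Type*} (A : V → V → Prop) : ℕ :=
  sInf {k | ∃ B : Set V, IsZFS A B ∧ k = B.ncard + dpt A B}

/-- The digraph obtained by flipping the single arc `(a,b)` to `(b,a)`. -/
def flipArc {V : Type*} (A : V → V → Prop) (a b : V) : V → V → Prop :=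
  fun u v => (A u v ∧ ¬(u = a ∧ v = b)) ∨ (u = b ∧ v = a)

/-!
Take a zero forcing set `B` of `Γ` realising `th(Γ)` in `t` steps. The blue sets of a propagation
form a chain, so one endpoint of `(a,b)` turns blue no later than the other; colour the other one
blue from the start. Then in `Γ₀` every vertex is blue at least as early as in `Γ`: the removed
arc `(a,b)` could only have been used while `a` is blue and `b` white, and the new arc `(b,a)`
only matters while `b` is blue and `a` white, and neither situation occurs. Hence
`th(Γ₀) ≤ |B| + 1 + t = th(Γ) + 1`, and since flipping `(b,a)` back in `Γ₀` recovers `Γ`, the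
bound holds in both directions.
-/

section

variable {V : Type*}

theorem Monotone.forall_mem_imp_or_forall_mem_imp {ι α : Type*} [LinearOrder ι] {S : ι → Set α}
    (hS : Monotone S) (x y : α) :
    (∀ i, x ∈ S i → y ∈ S i) ∨ (∀ i, y ∈ S i → x ∈ S i) := by
  by_contra! h
  obtain ⟨⟨i, hxi, hyi⟩, ⟨j, hyj, hxj⟩⟩ := h
  rcases le_total i j with hij | hji
  · exact hxj (hS hij hxi)
  · exact hyi (hS hji hyj)

theorem monotone_iterate_dstep (A : V → V → Prop) (B : Set V) :
    Monotone fun i => (dstep A)^[i] B :=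
  monotone_nat_of_le_succ fun i => by
    rw [Function.iterate_succ_apply']
    exact subset_union_left

theorem subset_iterate_dstep (A : V → V → Prop) (B : Set V) (i : ℕ) : B ⊆ (dstep A)^[i] B :=
  monotone_iterate_dstep A B (Nat.zero_le i)

theorem dstep_subset_dstep {A A' : V → V → Prop} {S T : Set V} (hST : S ⊆ T)
    (hforce : ∀ u ∈ S, ∀ w, A u w → w ∉ T → A' u w)
    (hnew : ∀ u ∈ S, ∀ x, A' u x → x ∉ T → A u x) :
    dstep A S ⊆ dstep A' T := by
  rintro w (hw | ⟨u, huS, huw, huniq⟩)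
  · exact Or.inl (hST hw)
  by_cases hwT : w ∈ T
  · exact Or.inl hwT
  exact Or.inr ⟨u, hST huS, hforce u huS w huw hwT, fun x hux hxT =>
    huniq x (hnew u huS x hux hxT) fun hxS => hxT (hST hxS)⟩

theorem dstep_subset_dstep_flipArc {A : V → V → Prop} {a b : V} {S T : Set V} (hST : S ⊆ T)
    (hab : a ∈ S → b ∈ T) (hba : b ∈ S → a ∈ T) :
    dstep A S ⊆ dstep (flipArc A a b) T := by
  refine dstep_subset_dstep hST (fun u hu w huw hwT => Or.inl ⟨huw, ?_⟩) ?_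
  · rintro ⟨rfl, rfl⟩
    exact hwT (hab hu)
  · rintro u hu x (⟨hux, -⟩ | ⟨rfl, rfl⟩) hxT
    · exact hux
    · exact absurd (hba hu) hxT

theorem iterate_dstep_subset_iterate_dstep_flipArc {A : V → V → Prop} {a b : V} {B B' : Set V}
    (hB : B ⊆ B') (hab : ∀ i, a ∈ (dstep A)^[i] B → b ∈ (dstep A)^[i] B ∨ b ∈ B')
    (hba : ∀ i, b ∈ (dstep A)^[i] B → a ∈ (dstep A)^[i] B ∨ a ∈ B') (i : ℕ) :
    (dstep A)^[i] B ⊆ (dstep (flipArc A a b))^[i] B' := by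
  induction i with
  | zero => exact hB
  | succ i ih =>
    have hB' := subset_iterate_dstep (flipArc A a b) B' i
    simp only [Function.iterate_succ_apply']
    exact dstep_subset_dstep_flipArc ih
      (fun ha => (hab i ha).elim (ih ·) (hB' ·)) (fun hb => (hba i hb).elim (ih ·) (hB' ·))

theorem exists_iterate_dstep_flipArc_insert_eq_univ {A : V → V → Prop} {B : Set V} {t : ℕ}
    (h : (dstep A)^[t] B = univ) (a b : V) :
    ∃ x, (dstep (flipArc A a b))^[t] (insert x B) = univ := by
  rcases (monotone_iterate_dstep A B).forall_mem_imp_or_forall_mem_imp b a with hba | hab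
  · refine ⟨b, eq_univ_of_univ_subset (h ▸ ?_)⟩
    exact iterate_dstep_subset_iterate_dstep_flipArc (subset_insert b B)
      (fun _ _ => Or.inr (mem_insert b B)) (fun i hb => Or.inl (hba i hb)) t
  · refine ⟨a, eq_univ_of_univ_subset (h ▸ ?_)⟩
    exact iterate_dstep_subset_iterate_dstep_flipArc (subset_insert a B)
      (fun i ha => Or.inl (hab i ha)) (fun _ _ => Or.inr (mem_insert a B)) t

theorem dth_le_of_iterate_dstep_eq_univ {A : V → V → Prop} {B : Set V} {t : ℕ}
    (h : (dstep A)^[t] B = univ) : dth A ≤ B.ncard + t := by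
  have hpt : dpt A B ≤ t := Nat.sInf_le h
  have hth : dth A ≤ B.ncard + dpt A B := Nat.sInf_le ⟨B, ⟨t, h⟩, rfl⟩
  omega

theorem exists_iterate_dstep_eq_univ_and_dth_eq (A : V → V → Prop) :
    ∃ B : Set V, ∃ t, (dstep A)^[t] B = univ ∧ dth A = B.ncard + t := by
  obtain ⟨B, ⟨t, ht⟩, hth⟩ : dth A ∈ {k | ∃ B : Set V, IsZFS A B ∧ k = B.ncard + dpt A B} :=
    Nat.sInf_mem ⟨_, univ, ⟨0, rfl⟩, rfl⟩
  exact ⟨B, dpt A B, Nat.sInf_mem (s := {t | (dstep A)^[t] B = univ}) ⟨t, ht⟩, hth⟩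

theorem dth_flipArc_le (A : V → V → Prop) (a b : V) : dth (flipArc A a b) ≤ dth A + 1 := by
  obtain ⟨B, t, hB, hth⟩ := exists_iterate_dstep_eq_univ_and_dth_eq A
  obtain ⟨x, hx⟩ := exists_iterate_dstep_flipArc_insert_eq_univ hB a b
  calc dth (flipArc A a b) ≤ (insert x B).ncard + t := dth_le_of_iterate_dstep_eq_univ hx
    _ ≤ B.ncard + 1 + t := Nat.add_le_add_right (ncard_insert_le x B) t
    _ = dth A + 1 := by omega

theorem flipArc_flipArc {A : V → V → Prop} {a b : V} (hab : A a b) (hba : ¬ A b a) :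
    flipArc (flipArc A a b) b a = A := by
  funext u v
  apply propext
  constructor
  · rintro (⟨⟨huv, -⟩ | ⟨rfl, rfl⟩, hne⟩ | ⟨rfl, rfl⟩)
    · exact huv
    · exact absurd ⟨rfl, rfl⟩ hne
    · exact hab
  · intro huv
    by_cases h : u = a ∧ v = b
    · exact Or.inr h
    · refine Or.inl ⟨Or.inl ⟨huv, h⟩, ?_⟩
      rintro ⟨rfl, rfl⟩
      exact hba huv

end

theorem stmt1_general {V : Type*} (A : V → V → Prop)
    (a b : V) (hab : A a b) (hba : ¬ A b a) :
    dth (flipArc A a b) ≤ dth A + 1 ∧ dth A ≤ dth (flipArc A a b) + 1 := by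
  refine ⟨dth_flipArc_le A a b, ?_⟩
  simpa only [flipArc_flipArc hab hba] using dth_flipArc_le (flipArc A a b) b a

/-- Flipping a single arc changes the throttling number by at most one. -/
theorem stmt1 {V : Type*} [Fintype V] (A : V → V → Prop) (hirr : Irreflexive A)
    (a b : V) (hab : A a b) (hba : ¬ A b a) :
    dth (flipArc A a b) ≤ dth A + 1 ∧ dth A ≤ dth (flipArc A a b) + 1 :=
  stmt1_general A a b hab hba
end

section
/- For every fixed positive integer t, there are (up to isomorphism) only finitely many simple digraphs Γ with th(Γ) = t. -/
/-
A zero forcing step at most doubles the set of blue vertices: each newly forced vertex has a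
blue forcer, and a blue vertex forces at most one vertex. Hence a zero forcing set `B` with
propagation time `p` colours at most `2 ^ p * |B|` vertices, and a throttling set realising
`th(Γ) = t` shows that `Γ` has at most `2 ^ t * t` vertices.
-/

open Set

section ZeroForcing

variable {V : Type*} (A : V → V → Prop)

theorem subset_dstep (S : Set V) : S ⊆ dstep A S := subset_union_left

theorem ncard_dstep_diff_le [Finite V] (S : Set V) : (dstep A S \ S).ncard ≤ S.ncard := by
  have hforcer : ∀ w ∈ dstep A S \ S, ∃ u ∈ S, A u w ∧ ∀ x, A u x → x ∉ S → x = w := by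
    rintro w ⟨hw | hw, hwS⟩
    exacts [absurd hw hwS, hw]
  choose! f hfS hfA hfuniq using hforcer
  refine ncard_le_ncard_of_injOn f hfS (fun w hw w' hw' hfw => ?_) (toFinite S)
  exact (hfuniq w hw w' (hfw ▸ hfA w' hw') hw'.2).symm

theorem ncard_dstep_le [Finite V] (S : Set V) : (dstep A S).ncard ≤ 2 * S.ncard :=
  calc (dstep A S).ncard = (S ∪ (dstep A S \ S)).ncard := by
        rw [union_sdiff_self, union_eq_right.2 (subset_dstep A S)]
    _ ≤ S.ncard + (dstep A S \ S).ncard := ncard_union_le _ _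
    _ ≤ 2 * S.ncard := by linarith [ncard_dstep_diff_le A S]

theorem ncard_iterate_dstep_le [Finite V] (B : Set V) (k : ℕ) :
    ((dstep A)^[k] B).ncard ≤ 2 ^ k * B.ncard := by
  induction k with
  | zero => simp
  | succ k ih =>
    rw [Function.iterate_succ_apply', pow_succ']
    calc _ ≤ 2 * ((dstep A)^[k] B).ncard := ncard_dstep_le A _
      _ ≤ 2 * (2 ^ k * B.ncard) := by gcongr
      _ = _ := by ring

theorem isZFS_univ : IsZFS A univ := ⟨0, rfl⟩

theorem IsZFS.iterate_dpt_eq_univ {B : Set V} (hB : IsZFS A B) :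
    (dstep A)^[dpt A B] B = univ :=
  Nat.sInf_mem hB

theorem exists_isZFS_ncard_add_dpt_eq_dth :
    ∃ B : Set V, IsZFS A B ∧ dth A = B.ncard + dpt A B :=
  Nat.sInf_mem (s := {k | ∃ B : Set V, IsZFS A B ∧ k = B.ncard + dpt A B})
    ⟨_, univ, isZFS_univ A, rfl⟩

theorem IsZFS.card_le [Finite V] {B : Set V} (hB : IsZFS A B) :
    Nat.card V ≤ 2 ^ dpt A B * B.ncard := by
  simpa [hB.iterate_dpt_eq_univ] using ncard_iterate_dstep_le A B (dpt A B)

theorem card_le_two_pow_dth_mul_dth [Finite V] : Nat.card V ≤ 2 ^ dth A * dth A := by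
  obtain ⟨B, hB, hdth⟩ := exists_isZFS_ncard_add_dpt_eq_dth A
  calc Nat.card V ≤ 2 ^ dpt A B * B.ncard := hB.card_le A
    _ ≤ 2 ^ dth A * dth A := by gcongr <;> omega

end ZeroForcing

theorem stmt7_general (t : ℕ) :
    {p : Σ n : ℕ, Fin n → Fin n → Prop |
      Irreflexive p.2 ∧ dth p.2 = t}.Finite := by
  let N := 2 ^ t * t
  let embed : (Σ i : Fin (N + 1), (Fin i → Fin i → Prop)) → Σ n : ℕ, Fin n → Fin n → Prop :=
    fun x => ⟨x.1, x.2⟩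
  refine (finite_range embed).subset ?_
  rintro ⟨n, A⟩ ⟨-, hdth⟩
  have hn : n ≤ N := by simpa [hdth] using card_le_two_pow_dth_mul_dth A
  exact ⟨⟨⟨n, Nat.lt_succ_of_le hn⟩, A⟩, rfl⟩

/-- For a fixed positive integer `t`, there are only finitely many simple digraphs with
throttling number `t` (every finite digraph being represented, up to isomorphism, by an
arc relation on some `Fin n`). -/
theorem stmt7 (t : ℕ) (ht : 0 < t) :
    {p : Σ n : ℕ, Fin n → Fin n → Prop |
      Irreflexive p.2 ∧ dth p.2 = t}.Finite :=
  stmt7_general t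
end
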